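/- For every integer n ≥ 5, the standard filiform Lie algebra g_n of dimension n, with basis {e_1,…,e_n} and only nonzero brackets [e_1,e_i] = e_{i+1} for i = 2,…,n−1, admits a Ricci-flat metric which is not flat. -/

import Mathlib

open scoped BigOperators

namespace ArrowBreakingPaper

variable {ι : Type*} {g : Type*} [LieRing g] [LieAlgebra ℝ g]

/-- `⁅e i, e j⁆` is a nonzero multiple of `e k` (the arrow `e i →^{e j} e k`). -/
def Arrow (e : ι → g) (i j k : ι) : Prop :=
  ∃ c : ℝ, c ≠ 0 ∧ ⁅e i, e j⁆ = c • e k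

/-- A basis is *nice* if each bracket of two basis vectors is a multiple of a single basis
vector, and for all `i`, `k` there is at most one `j` such that the `e k`-coefficient of
`⁅e i, e j⁆` is nonzero. -/
def IsNiceBasis (e : Module.Basis ι ℝ g) : Prop :=
  (∀ i j : ι, ∃ (k : ι) (c : ℝ), ⁅e i, e j⁆ = c • e k) ∧
  (∀ i k j j' : ι, e.repr ⁅e i, e j⁆ k ≠ 0 → e.repr ⁅e i, e j'⁆ k ≠ 0 → j = j')

/-- An *arrow-breaking involution* of the (nice) basis `e`. -/
def IsArrowBreaking (e : ι → g) (σ : Equiv.Perm ι) : Prop :=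
  (∀ i, σ (σ i) = i) ∧
  (∀ i j k, Arrow e i j k → ∀ l, ¬ Arrow e l (σ j) (σ k)) ∧
  (∀ i j k, Arrow e i j k → ∀ m, ¬ Arrow e (σ i) (σ j) m)

/-- A `σ`-diagonal metric: `⟨e i, e (σ j)⟩ = gᵢ δᵢⱼ` with all `gᵢ ≠ 0` and `g_{σ i} = gᵢ`. -/
def IsSigmaDiagonal [DecidableEq ι] (e : Module.Basis ι ℝ g) (σ : Equiv.Perm ι)
    (B : LinearMap.BilinForm ℝ g) : Prop :=
  ∃ gv : ι → ℝ, (∀ i, gv i ≠ 0) ∧ (∀ i, gv (σ i) = gv i) ∧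
    ∀ i j, B (e i) (e (σ j)) = if i = j then gv i else 0

/-- Symmetry of a bilinear form. -/
def IsSymm (B : LinearMap.BilinForm ℝ g) : Prop := ∀ x y : g, B x y = B y x

/-- Nondegeneracy of a bilinear form. -/
def Nondeg (B : LinearMap.BilinForm ℝ g) : Prop :=
  ∀ v : g, (∀ w : g, B v w = 0) → v = 0

/-- The Gram matrix of a bilinear form in a basis. -/
noncomputable def gram [Fintype ι] (e : Module.Basis ι ℝ g) (B : LinearMap.BilinForm ℝ g) :
    Matrix ι ι ℝ := Matrix.of fun i j => B (e i) (e j)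

/-- The Ricci curvature `ric(v,w) = ½⟨dv♭, dw♭⟩ − ½⟨ad v, ad w⟩` written in the
coordinates of a basis `e`, where `dα(x,y) = −α(⁅x,y⁆)` and the scalar products on
`Λ²g*` and `g*⊗g` are induced by the dual metric (inverse Gram matrix). -/
noncomputable def ricci [Fintype ι] [DecidableEq ι] (e : Module.Basis ι ℝ g)
    (B : LinearMap.BilinForm ℝ g) (v w : g) : ℝ :=
  (1/2) * ((1/2) * ∑ i, ∑ j, ∑ k, ∑ l,
      (gram e B)⁻¹ i k * (gram e B)⁻¹ j l * (-(B v ⁅e i, e j⁆)) * (-(B w ⁅e k, e l⁆)))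
  - (1/2) * ∑ i, ∑ j, (gram e B)⁻¹ i j * B ⁅v, e i⁆ ⁅w, e j⁆

/-- Ricci-flatness of a metric on a Lie algebra. -/
def IsRicciFlat (B : LinearMap.BilinForm ℝ g) : Prop :=
  ∀ (m : ℕ) (e : Module.Basis (Fin m) ℝ g) (v w : g), ricci e B v w = 0

/-- The Koszul formula characterizing the Levi-Civita connection. -/
def IsLeviCivita (B : LinearMap.BilinForm ℝ g) (nab : g → g → g) : Prop :=
  ∀ u v w : g, 2 * B (nab u v) w = B ⁅u, v⁆ w - B ⁅v, w⁆ u + B ⁅w, u⁆ v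

/-- The curvature `R(u,v)w = ∇_{⁅u,v⁆} w − ∇_u ∇_v w + ∇_v ∇_u w`. -/
def curv (nab : g → g → g) (u v w : g) : g :=
  nab ⁅u, v⁆ w - nab u (nab v w) + nab v (nab u w)

/-- Flatness of a metric on a Lie algebra. -/
def IsFlat (B : LinearMap.BilinForm ℝ g) : Prop :=
  ∃ nab : g → g → g, IsLeviCivita B nab ∧ ∀ u v w : g, curv nab u v w = 0


/-!
Take the basis in the order `e 0, …, e (n-1)` and the anti-diagonal metric `⟨e i, e (n-1-i)⟩ = 1`,
whose Gram matrix is the permutation matrix of the reversal `σ : i ↦ n-1-i`. The reversal is an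
arrow-breaking involution: if `⁅e i, e j⁆` is a nonzero multiple of `e k`, then
`⁅e (σ i), e (σ j)⁆ = 0` and no bracket `⁅e l, e (σ j)⁆` has a component along `e (σ k)`. As the
inverse Gram matrix only pairs `i` with `σ i`, every summand of the coordinate formula for `ric` in
the basis `e` vanishes. Both terms of `ric` are traces `tr (G⁻¹ C G⁻ᵀ Dᵀ)`, `tr (G⁻¹ Aᵀ)` of
matrices of bilinear forms, so they do not depend on the basis and the metric is Ricci-flat.

It is not flat: the Koszul formula gives `∇_{e₁} e₀ = -e₂`, `∇_{e₀} e₀ = -e₁`, `∇_{e₂} e₀ = -e₃`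
and `∇_{e₀} e₂ = ∇_{e₁} e₁ = 0`, hence `R(e₀, e₁) e₀ = -e₃`.
-/

open scoped Matrix

/-- `lieForm B v x y = B v ⁅x, y⁆ = -(dv♭)(x, y)`. -/
noncomputable def lieForm (B : LinearMap.BilinForm ℝ g) (v : g) : LinearMap.BilinForm ℝ g :=
  (LieAlgebra.ad ℝ g : g →ₗ[ℝ] Module.End ℝ g).compr₂ (B v)

noncomputable def adForm (B : LinearMap.BilinForm ℝ g) (v w : g) : LinearMap.BilinForm ℝ g :=
  B.compl₁₂ (LieAlgebra.ad ℝ g v) (LieAlgebra.ad ℝ g w)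

lemma sum_sum_mul_eq_trace {m : Type*} [Fintype m] (M X : Matrix m m ℝ) :
    ∑ i, ∑ j, M i j * X i j = Matrix.trace (M * Xᵀ) := by
  simp [Matrix.trace, Matrix.mul_apply]

section BasisChange

variable {κ : Type*} [Fintype ι] [DecidableEq ι] [Fintype κ]

lemma trace_basis_change {P : Matrix ι κ ℝ} {Q : Matrix κ ι ℝ} (hPQ : P * Q = 1)
    (M X : Matrix ι ι ℝ) :
    Matrix.trace (Q * M * Qᵀ * (Pᵀ * X * P)ᵀ) = Matrix.trace (M * Xᵀ) := by
  have hQP : Qᵀ * Pᵀ = 1 := by rw [← Matrix.transpose_mul, hPQ, Matrix.transpose_one]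
  simp only [Matrix.transpose_mul, Matrix.transpose_transpose, ← Matrix.mul_assoc]
  rw [Matrix.trace_mul_comm]
  simp only [← Matrix.mul_assoc, hPQ, Matrix.one_mul]
  rw [Matrix.mul_assoc M, hQP, Matrix.mul_one]

lemma trace_basis_change₄ {P : Matrix ι κ ℝ} {Q : Matrix κ ι ℝ} (hPQ : P * Q = 1)
    (M X Y : Matrix ι ι ℝ) :
    Matrix.trace (Q * M * Qᵀ * (Pᵀ * Y * P) * (Q * M * Qᵀ)ᵀ * (Pᵀ * X * P)ᵀ) =
      Matrix.trace (M * Y * Mᵀ * Xᵀ) := by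
  have hQP : Qᵀ * Pᵀ = 1 := by rw [← Matrix.transpose_mul, hPQ, Matrix.transpose_one]
  simp only [Matrix.transpose_mul, Matrix.transpose_transpose, ← Matrix.mul_assoc]
  rw [Matrix.trace_mul_comm]
  simp only [← Matrix.mul_assoc, hPQ, Matrix.one_mul]
  rw [Matrix.mul_assoc M Qᵀ, hQP, Matrix.mul_one, Matrix.mul_assoc (M * Y) P, hPQ, Matrix.mul_one,
    Matrix.mul_assoc (M * Y * Mᵀ), hQP, Matrix.mul_one]

lemma gram_eq_toMatrix (e : Module.Basis ι ℝ g) (B : LinearMap.BilinForm ℝ g) :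
    gram e B = LinearMap.BilinForm.toMatrix e B := by
  ext i j
  rw [LinearMap.BilinForm.toMatrix_apply]
  rfl

lemma ricci_eq_trace (e : Module.Basis ι ℝ g) (B : LinearMap.BilinForm ℝ g) (v w : g) :
    ricci e B v w =
      1 / 4 * Matrix.trace ((gram e B)⁻¹ * LinearMap.BilinForm.toMatrix e (lieForm B w) *
          ((gram e B)⁻¹)ᵀ * (LinearMap.BilinForm.toMatrix e (lieForm B v))ᵀ)
        - 1 / 2 * Matrix.trace
            ((gram e B)⁻¹ * (LinearMap.BilinForm.toMatrix e (adForm B v w))ᵀ) := by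
  set M := (gram e B)⁻¹
  have quartic : ∑ i, ∑ j, ∑ k, ∑ l, M i k * M j l * (-(B v ⁅e i, e j⁆)) * (-(B w ⁅e k, e l⁆))
      = ∑ i, ∑ k, M i k * (LinearMap.BilinForm.toMatrix e (lieForm B v) * M *
          (LinearMap.BilinForm.toMatrix e (lieForm B w))ᵀ) i k := by
    simp only [Matrix.mul_apply, Matrix.transpose_apply, LinearMap.BilinForm.toMatrix_apply,
      lieForm, LinearMap.compr₂_apply, LieHom.coe_toLinearMap, LieAlgebra.ad_apply,
      Finset.mul_sum, Finset.sum_mul]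
    refine Finset.sum_congr rfl fun i _ => ?_
    rw [Finset.sum_comm]
    refine Finset.sum_congr rfl fun k _ => ?_
    rw [Finset.sum_comm]
    exact Finset.sum_congr rfl fun j _ => Finset.sum_congr rfl fun l _ => by ring
  have quadratic : ∑ i, ∑ j, M i j * B ⁅v, e i⁆ ⁅w, e j⁆
      = ∑ i, ∑ j, M i j * LinearMap.BilinForm.toMatrix e (adForm B v w) i j := by
    simp [adForm]
  rw [ricci, quartic, quadratic, sum_sum_mul_eq_trace, sum_sum_mul_eq_trace]
  simp only [Matrix.transpose_mul, Matrix.transpose_transpose, Matrix.mul_assoc]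
  ring

variable [DecidableEq κ]

lemma inv_gram_basis_change (e : Module.Basis ι ℝ g) (f : Module.Basis κ ℝ g)
    (B : LinearMap.BilinForm ℝ g) (hB : IsUnit (gram e B).det) :
    (gram f B)⁻¹ = f.toMatrix e * (gram e B)⁻¹ * (f.toMatrix e)ᵀ := by
  apply Matrix.inv_eq_right_inv
  rw [gram_eq_toMatrix f, ← LinearMap.BilinForm.toMatrix_mul_basis_toMatrix e f,
    ← gram_eq_toMatrix]
  simp only [Matrix.mul_assoc]
  rw [← Matrix.mul_assoc (e.toMatrix f), e.toMatrix_mul_toMatrix_flip, Matrix.one_mul,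
    ← Matrix.mul_assoc (gram e B), Matrix.mul_nonsing_inv _ hB, Matrix.one_mul,
    ← Matrix.transpose_mul, f.toMatrix_mul_toMatrix_flip, Matrix.transpose_one]

lemma ricci_basis_change (e : Module.Basis ι ℝ g) (f : Module.Basis κ ℝ g)
    (B : LinearMap.BilinForm ℝ g) (hB : IsUnit (gram e B).det) (v w : g) :
    ricci f B v w = ricci e B v w := by
  have hPQ := e.toMatrix_mul_toMatrix_flip f
  rw [ricci_eq_trace, ricci_eq_trace, inv_gram_basis_change e f B hB,
    ← LinearMap.BilinForm.toMatrix_mul_basis_toMatrix e f (lieForm B v),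
    ← LinearMap.BilinForm.toMatrix_mul_basis_toMatrix e f (lieForm B w),
    ← LinearMap.BilinForm.toMatrix_mul_basis_toMatrix e f (adForm B v w),
    trace_basis_change hPQ, trace_basis_change₄ hPQ]

end BasisChange

lemma isRicciFlat_of_ricci_eq_zero [Fintype ι] [DecidableEq ι] (e : Module.Basis ι ℝ g)
    (B : LinearMap.BilinForm ℝ g) (hB : IsUnit (gram e B).det) (h : ∀ v w, ricci e B v w = 0) :
    IsRicciFlat B := by
  intro m f v w
  rw [ricci_basis_change e f B hB, h]

section ArrowBreaking

variable {e : Module.Basis ι ℝ g} {σ : Equiv.Perm ι} {B : LinearMap.BilinForm ℝ g}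

lemma lie_basis_eq_zero_of_forall_not_arrow
    (hmono : ∀ i j, ∃ (k : ι) (c : ℝ), ⁅e i, e j⁆ = c • e k) {i j : ι}
    (h : ∀ k, ¬ Arrow e i j k) : ⁅e i, e j⁆ = 0 := by
  obtain ⟨k, c, hk⟩ := hmono i j
  by_cases hc : c = 0
  · simp [hk, hc]
  · exact absurd ⟨c, hc, hk⟩ (h k)

lemma IsArrowBreaking.lie_basis_eq_zero_or (hσ : IsArrowBreaking e σ)
    (hmono : ∀ i j, ∃ (k : ι) (c : ℝ), ⁅e i, e j⁆ = c • e k) (i j : ι) :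
    ⁅e i, e j⁆ = 0 ∨ ⁅e (σ i), e (σ j)⁆ = 0 := by
  obtain ⟨k, c, hk⟩ := hmono i j
  by_cases hc : c = 0
  · simp [hk, hc]
  · exact .inr (lie_basis_eq_zero_of_forall_not_arrow hmono (hσ.2.2 i j k ⟨c, hc, hk⟩))

variable [DecidableEq ι]

lemma IsSigmaDiagonal.apply_basis (hB : IsSigmaDiagonal e σ B) :
    ∃ gv : ι → ℝ, (∀ i, gv i ≠ 0) ∧ ∀ i j, B (e i) (e j) = if σ i = j then gv i else 0 := by
  obtain ⟨gv, hgv, -, h⟩ := hB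
  refine ⟨gv, hgv, fun i j => ?_⟩
  simpa [← Equiv.eq_symm_apply] using h i (σ.symm j)

lemma IsArrowBreaking.sigmaDiagonal_lie_basis_lie_basis (hσ : IsArrowBreaking e σ)
    (hmono : ∀ i j, ∃ (k : ι) (c : ℝ), ⁅e i, e j⁆ = c • e k) (hB : IsSigmaDiagonal e σ B)
    (a b j : ι) : B ⁅e a, e (σ j)⁆ ⁅e b, e j⁆ = 0 := by
  obtain ⟨gv, -, hBe⟩ := hB.apply_basis
  obtain ⟨k, c, hk⟩ := hmono a (σ j)
  obtain ⟨l, c', hl⟩ := hmono b j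
  by_cases hc : c = 0
  · simp [hk, hc]
  by_cases hc' : c' = 0
  · simp [hl, hc']
  have hkl : σ k ≠ l := by
    rintro rfl
    exact hσ.2.1 b j (σ k) ⟨c', hc', hl⟩ a (by rw [hσ.1]; exact ⟨c, hc, hk⟩)
  simp [hk, hl, hBe, hkl]

variable [Fintype ι]

lemma IsArrowBreaking.sigmaDiagonal_lie_lie_basis (hσ : IsArrowBreaking e σ)
    (hmono : ∀ i j, ∃ (k : ι) (c : ℝ), ⁅e i, e j⁆ = c • e k) (hB : IsSigmaDiagonal e σ B)
    (v w : g) (j : ι) : B ⁅v, e (σ j)⁆ ⁅w, e j⁆ = 0 := by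
  rw [← e.sum_repr v, ← e.sum_repr w]
  simp only [sum_lie, smul_lie, map_sum, map_smul, LinearMap.sum_apply, LinearMap.smul_apply,
    hσ.sigmaDiagonal_lie_basis_lie_basis hmono hB, smul_zero, Finset.sum_const_zero]

lemma IsSigmaDiagonal.exists_right_inv_gram (hB : IsSigmaDiagonal e σ B) :
    ∃ H : Matrix ι ι ℝ, gram e B * H = 1 ∧ ∀ i j, i ≠ σ j → H i j = 0 := by
  obtain ⟨gv, hgv, hBe⟩ := hB.apply_basis
  refine ⟨Matrix.of fun i j => if i = σ j then (gv j)⁻¹ else 0, ?_, fun i j h => by simp [h]⟩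
  ext i j
  rw [Matrix.mul_apply, Finset.sum_eq_single (σ i) (fun k _ hk => by simp [gram, hBe, Ne.symm hk])
    (by simp)]
  by_cases hij : i = j
  · subst hij
    simp [gram, hBe, hgv]
  · simp [gram, hBe, hij]

lemma IsSigmaDiagonal.isUnit_det_gram (hB : IsSigmaDiagonal e σ B) : IsUnit (gram e B).det :=
  let ⟨_, hH, _⟩ := hB.exists_right_inv_gram
  Matrix.isUnit_det_of_right_inverse hH

lemma IsSigmaDiagonal.inv_gram_apply_eq_zero (hB : IsSigmaDiagonal e σ B) {i j : ι}
    (h : i ≠ σ j) : (gram e B)⁻¹ i j = 0 := by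
  obtain ⟨H, hH, hzero⟩ := hB.exists_right_inv_gram
  rw [Matrix.inv_eq_right_inv hH, hzero i j h]

theorem IsArrowBreaking.isRicciFlat (hσ : IsArrowBreaking e σ)
    (hmono : ∀ i j, ∃ (k : ι) (c : ℝ), ⁅e i, e j⁆ = c • e k) (hB : IsSigmaDiagonal e σ B) :
    IsRicciFlat B := by
  refine isRicciFlat_of_ricci_eq_zero e B hB.isUnit_det_gram fun v w => ?_
  have hinv {i j : ι} (h : i ≠ σ j) := hB.inv_gram_apply_eq_zero h
  have quartic : ∑ i, ∑ j, ∑ k, ∑ l, (gram e B)⁻¹ i k * (gram e B)⁻¹ j l *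
      (-(B v ⁅e i, e j⁆)) * (-(B w ⁅e k, e l⁆)) = 0 := by
    refine Finset.sum_eq_zero fun i _ => Finset.sum_eq_zero fun j _ =>
      Finset.sum_eq_zero fun k _ => Finset.sum_eq_zero fun l _ => ?_
    by_cases hik : i = σ k
    · by_cases hjl : j = σ l
      · subst hik hjl
        rcases hσ.lie_basis_eq_zero_or hmono k l with h | h <;> simp [h]
      · simp [hinv hjl]
    · simp [hinv hik]
  have quadratic : ∑ i, ∑ j, (gram e B)⁻¹ i j * B ⁅v, e i⁆ ⁅w, e j⁆ = 0 := by
    refine Finset.sum_eq_zero fun i _ => Finset.sum_eq_zero fun j _ => ?_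
    by_cases hij : i = σ j
    · rw [hij, hσ.sigmaDiagonal_lie_lie_basis hmono hB, mul_zero]
    · simp [hinv hij]
  rw [ricci, quartic, quadratic]
  norm_num

end ArrowBreaking

section PermMetric

variable [Fintype ι] [DecidableEq ι]

noncomputable def permMetric (e : Module.Basis ι ℝ g) (σ : Equiv.Perm ι) :
    LinearMap.BilinForm ℝ g :=
  Matrix.toBilin e (σ.permMatrix ℝ)

lemma permMetric_apply_basis (e : Module.Basis ι ℝ g) (σ : Equiv.Perm ι) (i j : ι) :
    permMetric e σ (e i) (e j) = if σ i = j then 1 else 0 := by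
  rw [← LinearMap.BilinForm.toMatrix_apply e, permMetric, LinearMap.BilinForm.toMatrix_toBilin]
  simp [PEquiv.toMatrix_apply]

lemma isSymm_permMetric (e : Module.Basis ι ℝ g) {σ : Equiv.Perm ι} (hσ : ∀ i, σ (σ i) = i) :
    IsSymm (permMetric e σ) := by
  refine ((LinearMap.BilinForm.isSymm_iff_basis e).2 fun i j => ?_).eq
  have hsymm : σ i = j ↔ σ j = i := ⟨by rintro rfl; exact hσ i, by rintro rfl; exact hσ j⟩
  simp only [permMetric_apply_basis, hsymm]

lemma nondeg_permMetric (e : Module.Basis ι ℝ g) (σ : Equiv.Perm ι) :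
    Nondeg (permMetric e σ) :=
  ((LinearMap.BilinForm.nondegenerate_iff_det_ne_zero e).2 (by
    rw [permMetric, LinearMap.BilinForm.toMatrix_toBilin, Matrix.det_permutation]
    exact_mod_cast (Equiv.Perm.sign σ).ne_zero)).1

lemma isSigmaDiagonal_permMetric (e : Module.Basis ι ℝ g) (σ : Equiv.Perm ι) :
    IsSigmaDiagonal e σ (permMetric e σ) :=
  ⟨1, fun _ => one_ne_zero, fun _ => rfl, fun i j => by simp [permMetric_apply_basis]⟩

end PermMetric

lemma IsLeviCivita.eq_of_koszul {B : LinearMap.BilinForm ℝ g} (hB : Nondeg B)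
    (e : Module.Basis ι ℝ g) {nab : g → g → g} (hnab : IsLeviCivita B nab) {u v z : g}
    (hz : ∀ c, 2 * B z (e c) = B ⁅u, v⁆ (e c) - B ⁅v, e c⁆ u + B ⁅e c, u⁆ v) : nab u v = z := by
  have hzero : B (nab u v - z) = 0 := e.ext fun c => by
    have := hnab u v (e c)
    simp only [map_sub, LinearMap.sub_apply, LinearMap.zero_apply]
    linarith [hz c]
  exact sub_eq_zero.1 (hB _ fun w => by rw [hzero, LinearMap.zero_apply])

/-- Indices are shifted down by one: `e 0` is the paper's `e₁`. -/
def IsStandardFiliformBasis {n : ℕ} (e : Module.Basis (Fin n) ℝ g) : Prop :=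
  (∀ (i : ℕ) (_ : 1 ≤ i) (_ : i ≤ n - 2),
      ⁅e ⟨0, by omega⟩, e ⟨i, by omega⟩⁆ = e ⟨i + 1, by omega⟩) ∧
    ∀ i j : Fin n,
      ¬ ((i : ℕ) = 0 ∧ 1 ≤ (j : ℕ) ∧ (j : ℕ) ≤ n - 2) →
      ¬ ((j : ℕ) = 0 ∧ 1 ≤ (i : ℕ) ∧ (i : ℕ) ≤ n - 2) →
      ⁅e i, e j⁆ = 0

namespace IsStandardFiliformBasis

variable {n : ℕ} {e : Module.Basis (Fin n) ℝ g}

lemma lie_basis_of_left (he : IsStandardFiliformBasis e) {i j : Fin n} (hi : (i : ℕ) = 0)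
    (hj1 : 1 ≤ (j : ℕ)) (hj2 : (j : ℕ) ≤ n - 2) : ⁅e i, e j⁆ = e ⟨j + 1, by omega⟩ := by
  rw [show i = ⟨0, by omega⟩ from Fin.ext hi]
  exact he.1 j hj1 hj2

lemma lie_basis_of_right (he : IsStandardFiliformBasis e) {i j : Fin n} (hj : (j : ℕ) = 0)
    (hi1 : 1 ≤ (i : ℕ)) (hi2 : (i : ℕ) ≤ n - 2) : ⁅e i, e j⁆ = -e ⟨i + 1, by omega⟩ := by
  rw [← lie_skew, he.lie_basis_of_left hj hi1 hi2]

lemma exists_lie_basis_eq_smul (he : IsStandardFiliformBasis e) (i j : Fin n) :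
    ∃ (k : Fin n) (c : ℝ), ⁅e i, e j⁆ = c • e k := by
  by_cases hl : (i : ℕ) = 0 ∧ 1 ≤ (j : ℕ) ∧ (j : ℕ) ≤ n - 2
  · exact ⟨_, 1, by rw [he.lie_basis_of_left hl.1 hl.2.1 hl.2.2, one_smul]⟩
  by_cases hr : (j : ℕ) = 0 ∧ 1 ≤ (i : ℕ) ∧ (i : ℕ) ≤ n - 2
  · exact ⟨_, -1, by rw [he.lie_basis_of_right hr.1 hr.2.1 hr.2.2, neg_one_smul]⟩
  · exact ⟨i, 0, by rw [he.2 i j hl hr, zero_smul]⟩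

lemma arrow_cases (he : IsStandardFiliformBasis e) {i j k : Fin n} (h : Arrow e i j k) :
    ((i : ℕ) = 0 ∧ 1 ≤ (j : ℕ) ∧ (j : ℕ) ≤ n - 2 ∧ (k : ℕ) = j + 1) ∨
      ((j : ℕ) = 0 ∧ 1 ≤ (i : ℕ) ∧ (i : ℕ) ≤ n - 2 ∧ (k : ℕ) = i + 1) := by
  obtain ⟨c, hc, hk⟩ := h
  by_cases hl : (i : ℕ) = 0 ∧ 1 ≤ (j : ℕ) ∧ (j : ℕ) ≤ n - 2
  · rw [he.lie_basis_of_left hl.1 hl.2.1 hl.2.2, ← one_smul ℝ (e _)] at hk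
    have := e.linearIndependent.eq_of_smul_apply_eq_smul_apply _ _ _ _ one_ne_zero hk
    exact .inl ⟨hl.1, hl.2.1, hl.2.2, by rw [← this]⟩
  by_cases hr : (j : ℕ) = 0 ∧ 1 ≤ (i : ℕ) ∧ (i : ℕ) ≤ n - 2
  · rw [he.lie_basis_of_right hr.1 hr.2.1 hr.2.2, ← neg_one_smul ℝ (e _)] at hk
    have := e.linearIndependent.eq_of_smul_apply_eq_smul_apply _ _ _ _ (by norm_num) hk
    exact .inr ⟨hr.1, hr.2.1, hr.2.2, by rw [← this]⟩
  · rw [he.2 i j hl hr, eq_comm, smul_eq_zero] at hk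
    exact absurd (hk.resolve_left hc) (e.ne_zero k)

lemma isArrowBreaking_rev (he : IsStandardFiliformBasis e) : IsArrowBreaking e Fin.revPerm := by
  refine ⟨Fin.rev_rev, fun i j k h l h' => ?_, fun i j k h m h' => ?_⟩ <;>
  · rcases he.arrow_cases h with h | h <;> rcases he.arrow_cases h' with h' | h' <;>
      simp only [Fin.revPerm_apply, Fin.val_rev] at h' <;> omega

lemma permMetric_rev_apply_basis (i j : Fin n) :
    permMetric e Fin.revPerm (e i) (e j) = if (i : ℕ) + j = n - 1 then 1 else 0 := by
  rw [permMetric_apply_basis]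
  congr 1
  simp only [Fin.revPerm_apply, Fin.ext_iff, Fin.val_rev, eq_iff_iff]
  omega

lemma permMetric_rev_lie_basis (he : IsStandardFiliformBasis e) (i j k : Fin n) :
    permMetric e Fin.revPerm ⁅e i, e j⁆ (e k) =
      (if (i : ℕ) = 0 ∧ 1 ≤ (j : ℕ) ∧ (j : ℕ) ≤ n - 2 ∧ (j : ℕ) + k = n - 2 then 1 else 0) -
      (if (j : ℕ) = 0 ∧ 1 ≤ (i : ℕ) ∧ (i : ℕ) ≤ n - 2 ∧ (i : ℕ) + k = n - 2 then 1 else 0) := by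
  by_cases hl : (i : ℕ) = 0 ∧ 1 ≤ (j : ℕ) ∧ (j : ℕ) ≤ n - 2
  · rw [he.lie_basis_of_left hl.1 hl.2.1 hl.2.2, permMetric_rev_apply_basis, Fin.val_mk]
    split_ifs <;> norm_num <;> omega
  by_cases hr : (j : ℕ) = 0 ∧ 1 ≤ (i : ℕ) ∧ (i : ℕ) ≤ n - 2
  · rw [he.lie_basis_of_right hr.1 hr.2.1 hr.2.2, map_neg, LinearMap.neg_apply,
      permMetric_rev_apply_basis, Fin.val_mk]
    split_ifs <;> norm_num <;> omega
  · rw [he.2 i j hl hr, map_zero, LinearMap.zero_apply]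
    split_ifs <;> norm_num <;> omega

lemma not_isFlat (he : IsStandardFiliformBasis e) (hn : 5 ≤ n) :
    ¬ IsFlat (permMetric e Fin.revPerm) := by
  rintro ⟨nab, hnab, hflat⟩
  have koszul {u v z : g} := hnab.eq_of_koszul (nondeg_permMetric e _) e (u := u) (v := v) (z := z)
  obtain ⟨h00, h10, h20, h02, h11⟩ :
      nab (e ⟨0, by omega⟩) (e ⟨0, by omega⟩) = -e ⟨1, by omega⟩ ∧
      nab (e ⟨1, by omega⟩) (e ⟨0, by omega⟩) = -e ⟨2, by omega⟩ ∧
      nab (e ⟨2, by omega⟩) (e ⟨0, by omega⟩) = -e ⟨3, by omega⟩ ∧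
      nab (e ⟨0, by omega⟩) (-e ⟨2, by omega⟩) = 0 ∧
      nab (e ⟨1, by omega⟩) (-e ⟨1, by omega⟩) = 0 := by
    refine ⟨koszul fun c => ?_, koszul fun c => ?_, koszul fun c => ?_, koszul fun c => ?_,
      koszul fun c => ?_⟩ <;>
    · simp [he.permMetric_rev_lie_basis, permMetric_rev_apply_basis]
      split_ifs <;> norm_num <;> omega
  have hcurv := hflat (e ⟨0, by omega⟩) (e ⟨1, by omega⟩) (e ⟨0, by omega⟩)
  rw [curv, he.1 1 le_rfl (by omega), h20, h10, h00, h02, h11, sub_zero, add_zero,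
    neg_eq_zero] at hcurv
  exact e.ne_zero _ hcurv

end IsStandardFiliformBasis

/-- For `n ≥ 5`, the standard filiform Lie algebra of dimension `n` admits a
Ricci-flat metric which is not flat. -/
theorem statement19 (n : ℕ) (hn : 5 ≤ n) {g : Type*} [LieRing g] [LieAlgebra ℝ g]
    (e : Module.Basis (Fin n) ℝ g)
    (hbr : ∀ (i : ℕ) (hi1 : 1 ≤ i) (hi2 : i ≤ n - 2),
      ⁅e ⟨0, by omega⟩, e ⟨i, by omega⟩⁆ = e ⟨i + 1, by omega⟩)
    (hzero : ∀ i j : Fin n,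
      ¬ ((i : ℕ) = 0 ∧ 1 ≤ (j : ℕ) ∧ (j : ℕ) ≤ n - 2) →
      ¬ ((j : ℕ) = 0 ∧ 1 ≤ (i : ℕ) ∧ (i : ℕ) ≤ n - 2) →
      ⁅e i, e j⁆ = 0) :
    ∃ B : LinearMap.BilinForm ℝ g, IsSymm B ∧ Nondeg B ∧ IsRicciFlat B ∧ ¬ IsFlat B := by
  have he : IsStandardFiliformBasis e := ⟨hbr, hzero⟩
  exact ⟨permMetric e Fin.revPerm, isSymm_permMetric e Fin.rev_rev, nondeg_permMetric e _,
    he.isArrowBreaking_rev.isRicciFlat he.exists_lie_basis_eq_smul (isSigmaDiagonal_permMetric e _),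
    he.not_isFlat hn⟩

end ArrowBreakingPaper
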